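/- arXiv:2208.01563 — 2 statements merged into one kernel-verified Lean document; each statement's English description precedes it below -/
import Mathlib

section
/- Let (A, P) be an SR instance whose agent set is partitioned as A = F ⊎ S such that every agent in F has complete preferences derived from one common strict master list over A. Then the number of stable matchings of (A, P) is at most the number of matchings on the set S, i.e., the number of sets of pairwise disjoint unordered pairs of elements of S (including the empty set). -/
/-- A preference profile: each agent has a finite set of acceptable agents and a
rank function encoding its preference list (lower rank = more preferred). -/
structure PrefProfile (A : Type*) where
  acc : A → Finset A
  rank : A → A → ℕ

namespace PrefProfile

variable {A : Type*} (P : PrefProfile A)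

/-- Agent `a` strictly prefers `b` to `c`. -/
def Prefers (a b c : A) : Prop := P.rank a b < P.rank a c

/-- A lawful SR(-T) profile: no agent accepts itself and acceptability is symmetric. -/
def Lawful : Prop := (∀ a, a ∉ P.acc a) ∧ (∀ a b : A, b ∈ P.acc a → a ∈ P.acc b)

/-- Strict preferences: no ties among acceptable agents. -/
def Strict : Prop := ∀ a : A, ∀ b ∈ P.acc a, ∀ c ∈ P.acc a, P.rank a b = P.rank a c → b = c

end PrefProfile

/-- A finite set of unordered pairs of agents is a matching if its pairs are
non-diagonal and pairwise disjoint. -/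
def IsMatching {A : Type*} (M : Finset (Sym2 A)) : Prop :=
  (∀ p ∈ M, ¬ p.IsDiag) ∧ ∀ a b c : A, s(a, b) ∈ M → s(a, c) ∈ M → b = c

/-- `a` is matched in `M`. -/
def Matched {A : Type*} (M : Finset (Sym2 A)) (a : A) : Prop := ∃ b, s(a, b) ∈ M

/-- A matching is perfect if it matches all agents. -/
def IsPerfect {A : Type*} (M : Finset (Sym2 A)) : Prop := ∀ a, Matched M a

/-- All pairs of `M` consist of mutually acceptable agents w.r.t. `P`. -/
def Acceptable {A : Type*} (P : PrefProfile A) (M : Finset (Sym2 A)) : Prop :=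
  ∀ a b : A, s(a, b) ∈ M → b ∈ P.acc a

/-- The pair `{a, b}` blocks `M` w.r.t. `P`: `a` and `b` accept each other, and each
of them is either unmatched or strictly prefers the other to its partner. -/
def Blocks {A : Type*} (P : PrefProfile A) (M : Finset (Sym2 A)) (a b : A) : Prop :=
  b ∈ P.acc a ∧ a ∈ P.acc b ∧
    (∀ c, s(a, c) ∈ M → P.Prefers a b c) ∧ (∀ c, s(b, c) ∈ M → P.Prefers b a c)

/-- `M` is a (weakly) stable matching for `P`. -/
def IsStable {A : Type*} (P : PrefProfile A) (M : Finset (Sym2 A)) : Prop :=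
  IsMatching M ∧ Acceptable P M ∧ ∀ a b : A, ¬ Blocks P M a b

/-!
Two stable matchings `M₁, M₂` containing the same pairs inside `S` coincide, so `M ↦ M ∩ S²`
embeds the stable matchings into the matchings on `S`. For the uniqueness, show by induction
along the master list that every agent `a` has the same partner in `M₁` and `M₂`. Otherwise `a`
prefers its partner `u` in one of them, say `M₁`, to its situation in `M₂`, so `u` has an
`M₂`-partner `w` it prefers to `a`. If `u ∉ S`, the master list puts `w` before `a`, so `w` already
agrees. If `u ∈ S` and `a ∉ S`, stability alternately in `M₁` and `M₂` produces a chain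
`u = x₀, x₁, …` of agents of `S` strictly descending in the master list, each `M₂`-matched to
an agent outside `S` who is `M₁`-matched to the next one; the chain can only end with `a` and
some agent outside `S` preceding `u` blocking `M₂`.
-/

section StableMatchings

variable {A : Type*} {P : PrefProfile A} {M M₁ M₂ : Finset (Sym2 A)} {a b c : A}

theorem PrefProfile.Strict.prefers_of_not_prefers (hP : P.Strict) (hb : b ∈ P.acc a)
    (hc : c ∈ P.acc a) (hbc : b ≠ c) (h : ¬ P.Prefers a c b) : P.Prefers a b c :=
  lt_of_le_of_ne (not_lt.1 h) fun h => hbc (hP a b hb c hc h)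

/-- Holds vacuously when `a` is unmatched in `M`. -/
def PrefersToPartner (P : PrefProfile A) (M : Finset (Sym2 A)) (a b : A) : Prop :=
  ∀ c, s(a, c) ∈ M → P.Prefers a b c

def FollowsMasterList (P : PrefProfile A) (S : Finset A) (ml : A → ℕ) : Prop :=
  ∀ a ∉ S, (∀ b : A, b ∈ P.acc a ↔ b ≠ a) ∧
    ∀ b c : A, b ≠ a → c ≠ a → (P.Prefers a b c ↔ ml b < ml c)

theorem Sym2.mk_mem_swap (h : s(a, b) ∈ M) : s(b, a) ∈ M :=
  Sym2.eq_swap (a := a) ▸ h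

theorem PrefersToPartner.not_mem (h : PrefersToPartner P M a b) : s(a, b) ∉ M :=
  fun hab => lt_irrefl _ (h b hab)

theorem IsMatching.ne_of_mem (hM : IsMatching M) (h : s(a, b) ∈ M) : a ≠ b := by
  rintro rfl
  exact hM.1 _ h (Sym2.mk_isDiag_iff.2 rfl)

theorem IsMatching.mono {N : Finset (Sym2 A)} (hN : IsMatching N) (hMN : M ⊆ N) :
    IsMatching M :=
  ⟨fun p hp => hN.1 p (hMN hp), fun a b c hb hc => hN.2 a b c (hMN hb) (hMN hc)⟩

theorem IsMatching.prefersToPartner (hM : IsMatching M) (hab : s(a, b) ∈ M)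
    (h : P.Prefers a c b) : PrefersToPartner P M a c :=
  fun d hd => hM.2 a d b hd hab ▸ h

theorem IsStable.exists_preferred_partner (hM : IsStable P M) (hl : P.Lawful) (hP : P.Strict)
    (hab : b ∈ P.acc a) (h : PrefersToPartner P M a b) :
    ∃ c, s(b, c) ∈ M ∧ c ≠ a ∧ P.Prefers b c a := by
  by_contra! hno
  refine hM.2.2 a b ⟨hab, hl.2 a b hab, h, fun c hbc => ?_⟩
  have hca : c ≠ a := by
    rintro rfl
    exact h.not_mem (Sym2.mk_mem_swap hbc)
  exact hP.prefers_of_not_prefers (hl.2 a b hab) (hM.2.1 b c hbc) hca.symm (hno c hbc hca)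

section Uniqueness

variable {S : Finset A} {ml : A → ℕ}

theorem false_of_descending_chain (hl : P.Lawful) (hP : P.Strict) (hF : FollowsMasterList P S ml)
    (hml : Function.Injective ml) (h₁ : IsStable P M₁) (h₂ : IsStable P M₂)
    (hS : ∀ x ∈ S, ∀ y ∈ S, s(x, y) ∈ M₁ ↔ s(x, y) ∈ M₂) {a u : A}
    (ha : a ∉ S) (hu : u ∈ S) (hau : s(a, u) ∈ M₁) (hau₂ : PrefersToPartner P M₂ a u)
    (IH : ∀ b, ml b < ml a → ∀ c, s(b, c) ∈ M₁ ↔ s(b, c) ∈ M₂)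
    {x y : A} (hxy : s(x, y) ∈ M₂) (hy : y ∉ S) (hxy₁ : PrefersToPartner P M₁ x y)
    (hxu : ml x ≤ ml u) : False := by
  induction hn : ml x using Nat.strong_induction_on generalizing x y with
  | _ n ih =>
  subst hn
  obtain ⟨e, hye, -, hyex⟩ := h₁.exists_preferred_partner hl hP (h₂.2.1 x y hxy) hxy₁
  have hex : ml e < ml x :=
    ((hF y hy).2 e x (h₁.1.ne_of_mem hye).symm (h₂.1.ne_of_mem hxy)).1 hyex
  obtain ⟨g, heg, hgy, hegy⟩ := h₂.exists_preferred_partner hl hP (h₁.2.1 y e hye)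
    (h₂.1.prefersToPartner (Sym2.mk_mem_swap hxy) hyex)
  have heg₁ : PrefersToPartner P M₁ e g := h₁.1.prefersToPartner (Sym2.mk_mem_swap hye) hegy
  by_cases he : e ∈ S
  · have hg : g ∉ S := fun hg => heg₁.not_mem ((hS e he g hg).2 heg)
    exact ih (ml e) (by omega) heg hg heg₁ (by omega) rfl
  -- the chain stops: `a` and `e` block `M₂`
  have hua : u ≠ a := (h₁.1.ne_of_mem hau).symm
  have hea : e ≠ a := by
    rintro rfl
    exact hy (h₁.1.2 e y u (Sym2.mk_mem_swap hye) hau ▸ hu)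
  have hga : g ≠ a := by
    rintro rfl
    have := ((hF g ha).2 u e hua hea).1 (hau₂ e (Sym2.mk_mem_swap heg))
    omega
  have hag : ml a < ml g := by
    rcases lt_trichotomy (ml a) (ml g) with h | h | h
    · exact h
    · exact absurd (hml h).symm hga
    · exact absurd (h₁.1.2 e g y (Sym2.mk_mem_swap ((IH g h e).2 (Sym2.mk_mem_swap heg)))
      (Sym2.mk_mem_swap hye)) hgy
  refine h₂.2.2 a e ⟨((hF a ha).1 e).2 hea, ((hF e he).1 a).2 hea.symm, fun c hc => ?_,
    fun c hc => ?_⟩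
  · have hca : c ≠ a := (h₂.1.ne_of_mem hc).symm
    have := ((hF a ha).2 u c hua hca).1 (hau₂ c hc)
    exact ((hF a ha).2 e c hea hca).2 (by omega)
  · obtain rfl := h₂.1.2 e c g hc heg
    exact ((hF e he).2 a c hea.symm (h₂.1.ne_of_mem heg).symm).2 hag

theorem not_prefersToPartner_of_mem (hl : P.Lawful) (hP : P.Strict)
    (hF : FollowsMasterList P S ml) (hml : Function.Injective ml)
    (h₁ : IsStable P M₁) (h₂ : IsStable P M₂)
    (hS : ∀ x ∈ S, ∀ y ∈ S, s(x, y) ∈ M₁ ↔ s(x, y) ∈ M₂) {a u : A}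
    (IH : ∀ b, ml b < ml a → ∀ c, s(b, c) ∈ M₁ ↔ s(b, c) ∈ M₂) (hau : s(a, u) ∈ M₁) :
    ¬ PrefersToPartner P M₂ a u := by
  intro hau₂
  obtain ⟨w, huw, hwa, huwa⟩ := h₂.exists_preferred_partner hl hP (h₁.2.1 a u hau) hau₂
  have huw₁ : PrefersToPartner P M₁ u w := h₁.1.prefersToPartner (Sym2.mk_mem_swap hau) huwa
  by_cases hu : u ∈ S
  · by_cases ha : a ∈ S
    · exact hau₂.not_mem ((hS a ha u hu).1 hau)
    have hw : w ∉ S := fun hw => huw₁.not_mem ((hS u hu w hw).2 huw)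
    exact false_of_descending_chain hl hP hF hml h₁ h₂ hS ha hu hau hau₂ IH huw hw huw₁ le_rfl
  have hwa : ml w < ml a :=
    ((hF u hu).2 w a (h₂.1.ne_of_mem huw).symm (h₁.1.ne_of_mem hau)).1 huwa
  exact huw₁.not_mem (Sym2.mk_mem_swap ((IH w hwa u).2 (Sym2.mk_mem_swap huw)))

theorem mem_of_mem_of_forall_lt (hl : P.Lawful) (hP : P.Strict)
    (hF : FollowsMasterList P S ml) (hml : Function.Injective ml)
    (h₁ : IsStable P M₁) (h₂ : IsStable P M₂)
    (hS : ∀ x ∈ S, ∀ y ∈ S, s(x, y) ∈ M₁ ↔ s(x, y) ∈ M₂) {a c : A}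
    (IH : ∀ b, ml b < ml a → ∀ c, s(b, c) ∈ M₁ ↔ s(b, c) ∈ M₂) (hac : s(a, c) ∈ M₁) :
    s(a, c) ∈ M₂ := by
  by_contra hac₂
  by_cases hpref : PrefersToPartner P M₂ a c
  · exact not_prefersToPartner_of_mem hl hP hF hml h₁ h₂ hS IH hac hpref
  obtain ⟨d, had, hcd⟩ : ∃ d, s(a, d) ∈ M₂ ∧ ¬ P.Prefers a c d := by
    simpa [PrefersToPartner] using hpref
  have hdc : d ≠ c := by
    rintro rfl
    exact hac₂ had
  have hadc := hP.prefers_of_not_prefers (h₂.2.1 a d had) (h₁.2.1 a c hac) hdc hcd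
  exact not_prefersToPartner_of_mem hl hP hF hml h₂ h₁ (fun x hx y hy => (hS x hx y hy).symm)
    (fun b hb c => (IH b hb c).symm) had (h₁.1.prefersToPartner hac hadc)

theorem IsStable.eq_of_forall_mem_iff (hl : P.Lawful) (hP : P.Strict)
    (hF : FollowsMasterList P S ml) (hml : Function.Injective ml)
    (h₁ : IsStable P M₁) (h₂ : IsStable P M₂)
    (hS : ∀ x ∈ S, ∀ y ∈ S, s(x, y) ∈ M₁ ↔ s(x, y) ∈ M₂) : M₁ = M₂ := by
  have hagree : ∀ a c, s(a, c) ∈ M₁ ↔ s(a, c) ∈ M₂ := by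
    intro a
    induction hn : ml a using Nat.strong_induction_on generalizing a with
    | _ n ih =>
    subst hn
    have IH : ∀ b, ml b < ml a → ∀ c, s(b, c) ∈ M₁ ↔ s(b, c) ∈ M₂ :=
      fun b hb => ih (ml b) hb b rfl
    exact fun c => ⟨mem_of_mem_of_forall_lt hl hP hF hml h₁ h₂ hS IH,
      mem_of_mem_of_forall_lt hl hP hF hml h₂ h₁ (fun x hx y hy => (hS x hx y hy).symm)
        (fun b hb c => (IH b hb c).symm)⟩
  ext p
  induction p using Sym2.ind with
  | _ x y => exact hagree x y

end Uniqueness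

end StableMatchings

theorem stmt4_general {A : Type*}
    (P : PrefProfile A) (hl : P.Lawful) (hstrict : P.Strict)
    (S : Finset A) (ml : A → ℕ) (hml : Function.Injective ml)
    (hF : ∀ a ∉ S, (∀ b : A, b ∈ P.acc a ↔ b ≠ a) ∧
        ∀ b c : A, b ≠ a → c ≠ a → (P.Prefers a b c ↔ ml b < ml c)) :
    {M : Finset (Sym2 A) | IsStable P M}.ncard ≤
      {N : Finset (Sym2 A) | IsMatching N ∧ ∀ p ∈ N, ∀ a ∈ p, a ∈ S}.ncard := by
  classical
  have hfin : {N : Finset (Sym2 A) | IsMatching N ∧ ∀ p ∈ N, ∀ a ∈ p, a ∈ S}.Finite :=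
    S.sym2.powerset.finite_toSet.subset fun N hN =>
      Finset.mem_powerset.2 fun p hp => Finset.mem_sym2_iff.2 (hN.2 p hp)
  refine Set.ncard_le_ncard_of_injOn (· ∩ S.sym2) (fun M hM => ⟨hM.1.mono Finset.inter_subset_left,
    fun p hp => Finset.mem_sym2_iff.1 (Finset.mem_inter.1 hp).2⟩) (fun M₁ h₁ M₂ h₂ h => ?_) hfin
  refine h₁.eq_of_forall_mem_iff hl hstrict hF hml h₂ fun x hx y hy => ?_
  have hxy : s(x, y) ∈ S.sym2 := Finset.mk_mem_sym2_iff.2 ⟨hx, hy⟩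
  simpa [hxy] using congrArg (s(x, y) ∈ ·) h

/-- If all agents outside the outlier set `S` have complete preferences derived from a
common strict master list `ml`, then the number of stable matchings is at most the
number of matchings (sets of pairwise disjoint unordered pairs) on `S`. -/
theorem stmt4 {A : Type*} [Fintype A] [DecidableEq A]
    (P : PrefProfile A) (hl : P.Lawful) (hstrict : P.Strict)
    (S : Finset A) (ml : A → ℕ) (hml : Function.Injective ml)
    (hF : ∀ a ∉ S, (∀ b : A, b ∈ P.acc a ↔ b ≠ a) ∧
        ∀ b c : A, b ≠ a → c ≠ a → (P.Prefers a b c ↔ ml b < ml c)) :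
    {M : Finset (Sym2 A) | IsStable P M}.ncard ≤
      {N : Finset (Sym2 A) | IsMatching N ∧ ∀ p ∈ N, ∀ a ∈ p, a ∈ S}.ncard :=
  stmt4_general P hl hstrict S ml hml hF
end

section
/- Let (U ⊎ W, P) be an SM-T instance with |U| = |W| = n, let N be a weakly stable matching of size n−1, let m_s ∈ U and w_s ∈ W be the two agents unmatched by N, and let ℓ ∈ ℕ. Construct two weak preference profiles P1, P2 on the agent set U ∪ W ∪ {m*, w*, m*_s, w*_s} as follows. Agent m* accepts w* and all women of W, strictly preferring every woman of W (in an arbitrary but fixed strict order) to w*; symmetrically, w* accepts m* and all men of U, strictly preferring every man of U (in an arbitrary but fixed strict order) to m*; m* is appended at the end of every woman's preference list and w* at the end of every man's preference list. Agent m*_s accepts only w_s and w*_s, with preference list w_s ≻ w*_s in P1; agent w*_s accepts only m*_s and m_s, with preference list m*_s ≻ m_s in both profiles. In both profiles, m_s's preference list consists of w*_s followed by his list from P (with w* appended at its end), and w_s's preference list consists of m*_s followed by her list from P (with m* appended at its end); all other agents of U ∪ W keep their lists from P (with w* resp. m* appended at the end). Profile P2 is identical to P1 except that m*_s's preference list is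 w*_s ≻ w_s. Set M1 := N ∪ {{m*, w*}, {m_s, w*_s}, {m*_s, w_s}} and k := ℓ + 3. Then M1 is weakly stable with respect to P1, and the following are equivalent: (i) (U ⊎ W, P) has a perfect weakly stable matching N* with |N △ N*| ≤ ℓ; (ii) there is a matching M2 weakly stable with respect to P2 with {m*, w*} ∈ M2 and |M1 △ M2| ≤ k. -/
noncomputable section
open Classical

/-- Agents of the constructed instance: the men `U ⊕ Fin 2` (where `Sum.inr 0 = m*`
and `Sum.inr 1 = m*_s`) and the women `W ⊕ Fin 2` (where `Sum.inr 0 = w*` and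
`Sum.inr 1 = w*_s`). -/
abbrev Agent7 (U W : Type*) := (U ⊕ Fin 2) ⊕ (W ⊕ Fin 2)

variable {U W : Type*}

def mOld (u : U) : Agent7 U W := Sum.inl (Sum.inl u)
def wOld (w : W) : Agent7 U W := Sum.inr (Sum.inl w)
def mStar : Agent7 U W := Sum.inl (Sum.inr 0)
def mStarS : Agent7 U W := Sum.inl (Sum.inr 1)
def wStar : Agent7 U W := Sum.inr (Sum.inr 0)
def wStarS : Agent7 U W := Sum.inr (Sum.inr 1)

/-- The embedding of the original agents. -/
def emb7 : U ⊕ W → Agent7 U W := Sum.map Sum.inl Sum.inl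

variable [Fintype U] [Fintype W] [DecidableEq U] [DecidableEq W]

/-- The constructed profile (`P1` for `swapped = false`, `P2` for `swapped = true`):
`m*` accepts all women of `W` (in the arbitrary fixed strict order given by the
injection `ow`) followed by `w*`; symmetrically for `w*` (with order `om`); `m*_s`
accepts `w_s ≻ w*_s` (swapped in `P2`); `w*_s` accepts `m*_s ≻ m_s`; `m_s`'s list
is `w*_s`, then his list from `P`, then `w*`; `w_s`'s list is `m*_s`, then her list
from `P`, then `m*`; every other original agent keeps its list from `P`, with `w*`
(resp. `m*`) appended at the end. -/
def prof7 (P : PrefProfile (U ⊕ W)) (om : U → ℕ) (ow : W → ℕ) (ms : U) (ws : W)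
    (swapped : Bool) : PrefProfile (Agent7 U W) where
  acc x :=
    match x with
    | Sum.inl (Sum.inl u) =>
        ((P.acc (Sum.inl u)).image emb7 ∪ {wStar}) ∪
          (if u = ms then {wStarS} else ∅)
    | Sum.inl (Sum.inr i) =>
        if i = 0 then (Finset.univ.image fun w : W => wOld w) ∪ {wStar}
        else {wOld ws, wStarS}
    | Sum.inr (Sum.inl w) =>
        ((P.acc (Sum.inr w)).image emb7 ∪ {mStar}) ∪
          (if w = ws then {mStarS} else ∅)
    | Sum.inr (Sum.inr i) =>
        if i = 0 then (Finset.univ.image fun u : U => mOld u) ∪ {mStar}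
        else {mStarS, mOld ms}
  rank x y :=
    match x, y with
    | Sum.inl (Sum.inl u), Sum.inr (Sum.inl w) => P.rank (Sum.inl u) (Sum.inr w) + 1
    | Sum.inl (Sum.inl u), Sum.inr (Sum.inr i) =>
        if i = 0 then ((P.acc (Sum.inl u)).sup (P.rank (Sum.inl u))) + 2 else 0
    | Sum.inl (Sum.inr i), Sum.inr (Sum.inl w) =>
        if i = 0 then ow w else (if swapped then 1 else 0)
    | Sum.inl (Sum.inr i), Sum.inr (Sum.inr _) =>
        if i = 0 then (Finset.univ.sup ow) + 1 else (if swapped then 0 else 1)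
    | Sum.inr (Sum.inl w), Sum.inl (Sum.inl u) => P.rank (Sum.inr w) (Sum.inl u) + 1
    | Sum.inr (Sum.inl w), Sum.inl (Sum.inr i) =>
        if i = 0 then ((P.acc (Sum.inr w)).sup (P.rank (Sum.inr w))) + 2 else 0
    | Sum.inr (Sum.inr i), Sum.inl (Sum.inl u) => if i = 0 then om u else 1
    | Sum.inr (Sum.inr i), Sum.inl (Sum.inr _) =>
        if i = 0 then (Finset.univ.sup om) + 1 else 0
    | _, _ => 0

/-- `M1 := N ∪ {{m*, w*}, {m_s, w*_s}, {m*_s, w_s}}`. -/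
def M1def7 (N : Finset (Sym2 (U ⊕ W))) (ms : U) (ws : W) : Finset (Sym2 (Agent7 U W)) :=
  N.image (Sym2.map emb7) ∪
    {s((mStar : Agent7 U W), wStar), s(mOld ms, wStarS), s(mStarS, wOld ws)}

open Finset Function
open scoped symmDiff

section Matchings

variable {α β : Type*} {Q : PrefProfile α} {M : Finset (Sym2 α)} {a b c x : α}

theorem Blocks.symm (h : Blocks Q M a b) : Blocks Q M b a := ⟨h.2.1, h.1, h.2.2.2, h.2.2.1⟩

theorem not_blocks_of_rank_le (hac : s(a, c) ∈ M) (h : Q.rank a c ≤ Q.rank a b) :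
    ¬ Blocks Q M a b :=
  fun hb => Nat.not_le.mpr (hb.2.2.1 c hac) h

theorem not_blocks_of_rank_le_right (hbc : s(b, c) ∈ M) (h : Q.rank b c ≤ Q.rank b a) :
    ¬ Blocks Q M a b :=
  fun hb => not_blocks_of_rank_le hbc h hb.symm

def TopMatched (Q : PrefProfile α) (M : Finset (Sym2 α)) (a : α) : Prop :=
  ∃ c, s(a, c) ∈ M ∧ Q.rank a c = 0

theorem TopMatched.not_blocks (h : TopMatched Q M a) : ¬ Blocks Q M a b :=
  let ⟨_, hc, h0⟩ := h
  not_blocks_of_rank_le hc (h0 ▸ Nat.zero_le _)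

theorem TopMatched.not_blocks_right (h : TopMatched Q M b) : ¬ Blocks Q M a b :=
  fun hb => h.not_blocks hb.symm

theorem matched_insert [DecidableEq α] :
    Matched (insert s(a, b) M) x ↔ x = a ∨ x = b ∨ Matched M x := by
  simp only [Matched, mem_insert, Sym2.eq_iff]
  aesop

theorem IsMatching.insert [DecidableEq α] (hM : IsMatching M) (hab : a ≠ b)
    (ha : ¬ Matched M a) (hb : ¬ Matched M b) : IsMatching (insert s(a, b) M) := by
  refine ⟨fun p hp => ?_, fun x y z hy hz => ?_⟩
  · rcases mem_insert.mp hp with rfl | hp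
    · exact Sym2.mk_isDiag_iff.not.mpr hab
    · exact hM.1 p hp
  · have hx {y} (h : s(x, y) = s(a, b)) : ¬ Matched M x := by
      rcases Sym2.eq_iff.mp h with ⟨rfl, -⟩ | ⟨rfl, -⟩
      exacts [ha, hb]
    rcases mem_insert.mp hy with hy | hy <;> rcases mem_insert.mp hz with hz | hz
    · exact Sym2.congr_right.mp (hy.trans hz.symm)
    · exact absurd ⟨z, hz⟩ (hx hy)
    · exact absurd ⟨y, hy⟩ (hx hz)
    · exact hM.2 x y z hy hz

theorem Acceptable.insert [DecidableEq α] (hM : Acceptable Q M) (hab : b ∈ Q.acc a)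
    (hba : a ∈ Q.acc b) : Acceptable Q (insert s(a, b) M) := by
  intro x y hxy
  rcases mem_insert.mp hxy with h | h
  · rcases Sym2.eq_iff.mp h with ⟨rfl, rfl⟩ | ⟨rfl, rfl⟩ <;> assumption
  · exact hM x y h

variable {f : α → β} {N : Finset (Sym2 β)} {y z : β}

theorem mk_mem_image_map_iff [DecidableEq β] (hf : Injective f) :
    s(f a, f b) ∈ M.image (Sym2.map f) ↔ s(a, b) ∈ M := by
  rw [← Sym2.map_mk]
  exact (Sym2.map.injective hf).mem_finset_image

theorem exists_of_mk_mem_image_map [DecidableEq β] (h : s(y, z) ∈ M.image (Sym2.map f)) :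
    ∃ a b, s(a, b) ∈ M ∧ f a = y ∧ f b = z := by
  obtain ⟨p, hp, hpe⟩ := mem_image.mp h
  induction p using Sym2.ind with
  | _ a b =>
    rw [Sym2.map_mk] at hpe
    rcases Sym2.eq_iff.mp hpe with ⟨rfl, rfl⟩ | ⟨rfl, rfl⟩
    · exact ⟨a, b, hp, rfl, rfl⟩
    · exact ⟨b, a, Sym2.eq_swap ▸ hp, rfl, rfl⟩

theorem mk_notMem_image_map_left [DecidableEq β] (hy : y ∉ Set.range f) :
    s(y, z) ∉ M.image (Sym2.map f) := fun h =>
  let ⟨a, _, _, ha, _⟩ := exists_of_mk_mem_image_map h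
  hy ⟨a, ha⟩

theorem mk_notMem_image_map_right [DecidableEq β] (hy : y ∉ Set.range f) :
    s(z, y) ∉ M.image (Sym2.map f) :=
  Sym2.eq_swap ▸ mk_notMem_image_map_left hy

theorem matched_image_map_iff [DecidableEq β] (hf : Injective f) :
    Matched (M.image (Sym2.map f)) (f a) ↔ Matched M a := by
  constructor
  · rintro ⟨c, hc⟩
    obtain ⟨a', b, hab, ha, rfl⟩ := exists_of_mk_mem_image_map hc
    exact ⟨b, hf ha ▸ hab⟩
  · rintro ⟨b, hb⟩
    exact ⟨f b, (mk_mem_image_map_iff hf).mpr hb⟩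

theorem not_matched_image_map [DecidableEq β] (hy : y ∉ Set.range f) :
    ¬ Matched (M.image (Sym2.map f)) y :=
  fun ⟨_, h⟩ => mk_notMem_image_map_left hy h

theorem IsMatching.image_map [DecidableEq β] (hf : Injective f) (hM : IsMatching M) :
    IsMatching (M.image (Sym2.map f)) := by
  refine ⟨fun p hp => ?_, fun _ _ _ hy hz => ?_⟩
  · obtain ⟨q, hq, rfl⟩ := mem_image.mp hp
    exact fun hd => hM.1 q hq ((Sym2.isDiag_map hf).mp hd)
  · obtain ⟨a, b, hab, rfl, rfl⟩ := exists_of_mk_mem_image_map hy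
    obtain ⟨a', c, hac, ha, rfl⟩ := exists_of_mk_mem_image_map hz
    rw [hf ha] at hac
    rw [hM.2 a b c hab hac]

theorem IsMatching.preimage_map (hf : Injective f) (hN : IsMatching N) :
    IsMatching (N.preimage (Sym2.map f) (Sym2.map.injective hf).injOn) := by
  refine ⟨fun p hp hd => hN.1 _ (mem_preimage.mp hp) ((Sym2.isDiag_map hf).mpr hd),
    fun a b c hb hc => hf ?_⟩
  rw [mem_preimage, Sym2.map_mk] at hb hc
  exact hN.2 _ _ _ hb hc

theorem card_symmDiff_union_union [DecidableEq α] {s₁ s₂ t₁ t₂ : Finset α}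
    (h : Disjoint (s₁ ∪ s₂) (t₁ ∪ t₂)) :
    #((s₁ ∪ t₁) ∆ (s₂ ∪ t₂)) = #(s₁ ∆ s₂) + #(t₁ ∆ t₂) := by
  have h₁ : Disjoint s₁ t₁ := h.mono subset_union_left subset_union_left
  have h₂ : Disjoint s₂ t₂ := h.mono subset_union_right subset_union_right
  rw [← symmDiff_eq_union h₁, ← symmDiff_eq_union h₂, symmDiff_symmDiff_symmDiff_comm,
    symmDiff_eq_union (h.mono symmDiff_subset_union symmDiff_subset_union),
    card_union_of_disjoint (h.mono symmDiff_subset_union symmDiff_subset_union)]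

end Matchings

def PrefProfile.IsBipartite {U W : Type*} (P : PrefProfile (U ⊕ W)) : Prop :=
  (∀ u : U, ∀ x ∈ P.acc (Sum.inl u), ∃ w : W, x = Sum.inr w) ∧
    ∀ w : W, ∀ x ∈ P.acc (Sum.inr w), ∃ u : U, x = Sum.inl u

section Agents

variable {U W : Type*}

theorem emb7_injective : Injective (emb7 : U ⊕ W → Agent7 U W) :=
  Sum.map_injective.mpr ⟨Sum.inl_injective, Sum.inl_injective⟩

@[simp] theorem emb7_ne_mStar (a : U ⊕ W) : emb7 a ≠ mStar := by
  rcases a with _ | _ <;> nofun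

@[simp] theorem emb7_ne_mStarS (a : U ⊕ W) : emb7 a ≠ mStarS := by
  rcases a with _ | _ <;> nofun

@[simp] theorem emb7_ne_wStar (a : U ⊕ W) : emb7 a ≠ wStar := by
  rcases a with _ | _ <;> nofun

@[simp] theorem emb7_ne_wStarS (a : U ⊕ W) : emb7 a ≠ wStarS := by
  rcases a with _ | _ <;> nofun

theorem eq_new_of_notMem_range {x : Agent7 U W} (hx : x ∉ Set.range emb7) :
    x = mStar ∨ x = mStarS ∨ x = wStar ∨ x = wStarS := by
  rcases x with (u | i) | (w | i)
  · exact absurd ⟨Sum.inl u, rfl⟩ hx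
  · fin_cases i <;> simp [mStar, mStarS]
  · exact absurd ⟨Sum.inr w, rfl⟩ hx
  · fin_cases i <;> simp [wStar, wStarS]

theorem eq_mStar_wStar_or_of_notMem_range {M : Finset (Sym2 (Agent7 U W))} {x y : Agent7 U W}
    (hM : IsMatching M) (he : s(mStar, wStar) ∈ M) (hq : s(mStarS, wStarS) ∈ M)
    (hxy : s(x, y) ∈ M) (hx : x ∉ Set.range emb7) :
    s(x, y) = s(mStar, wStar) ∨ s(x, y) = s(mStarS, wStarS) := by
  rcases eq_new_of_notMem_range hx with rfl | rfl | rfl | rfl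
  · exact Or.inl (by rw [hM.2 _ _ _ hxy he])
  · exact Or.inr (by rw [hM.2 _ _ _ hxy hq])
  · exact Or.inl (by rw [hM.2 _ _ _ hxy (Sym2.eq_swap ▸ he), Sym2.eq_swap])
  · exact Or.inr (by rw [hM.2 _ _ _ hxy (Sym2.eq_swap ▸ hq), Sym2.eq_swap])

end Agents

section Lifts

variable {U W : Type*} [DecidableEq U] [DecidableEq W] {N : Finset (Sym2 (U ⊕ W))}
  {M : Finset (Sym2 (Agent7 U W))} {ms : U} {ws : W}

def M2def7 (N : Finset (Sym2 (U ⊕ W))) : Finset (Sym2 (Agent7 U W)) :=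
  N.image (Sym2.map emb7) ∪ {s((mStar : Agent7 U W), wStar), s(mStarS, wStarS)}

theorem M1def7_eq_insert : M1def7 N ms ws = insert s(mStar, wStar) (insert s(mOld ms, wStarS)
    (insert s(mStarS, wOld ws) (N.image (Sym2.map emb7)))) := by
  rw [M1def7, union_insert, union_insert, union_singleton]

theorem M2def7_eq_insert :
    M2def7 N = insert s(mStar, wStar) (insert s(mStarS, wStarS) (N.image (Sym2.map emb7))) := by
  rw [M2def7, union_insert, union_singleton]

theorem isMatching_M1def7 (hN : IsMatching N) (hms : ¬ Matched N (Sum.inl ms))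
    (hws : ¬ Matched N (Sum.inr ws)) : IsMatching (M1def7 N ms ws) := by
  have hms' : ¬ Matched (N.image (Sym2.map emb7)) (mOld ms : Agent7 U W) :=
    (matched_image_map_iff emb7_injective).not.mpr hms
  have hws' : ¬ Matched (N.image (Sym2.map emb7)) (wOld ws : Agent7 U W) :=
    (matched_image_map_iff emb7_injective).not.mpr hws
  rw [M1def7_eq_insert]
  refine (((hN.image_map emb7_injective).insert ?_ ?_ ?_).insert ?_ ?_ ?_).insert ?_ ?_ ?_ <;>
    (try simp only [matched_insert, not_or]) <;> and_intros <;>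
    first | exact hms' | exact hws' | exact not_matched_image_map (by simp) | nofun

theorem isMatching_M2def7 (hN : IsMatching N) : IsMatching (M2def7 N) := by
  rw [M2def7_eq_insert]
  refine ((hN.image_map emb7_injective).insert ?_ ?_ ?_).insert ?_ ?_ ?_ <;>
    (try simp only [matched_insert, not_or]) <;> and_intros <;>
    first | exact not_matched_image_map (by simp) | nofun

theorem card_symmDiff_M1def7_M2def7 (N N' : Finset (Sym2 (U ⊕ W))) :
    #(symmDiff (M1def7 N ms ws) (M2def7 N')) = #(symmDiff N N') + 3 := by
  have hinj := Sym2.map.injective (emb7_injective (U := U) (W := W))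
  set e : Sym2 (Agent7 U W) := s(mStar, wStar)
  set q : Sym2 (Agent7 U W) := s(mStarS, wStarS)
  have hnew : #(symmDiff {e, s(mOld ms, wStarS), s(mStarS, wOld ws)} {e, q}) = 3 := by
    obtain ⟨h₁, h₂, h₃, h₄, h₅, h₆⟩ : s(mOld ms, wStarS) ≠ e ∧ s(mStarS, wOld ws) ≠ e ∧
        s(mOld ms, wStarS) ≠ q ∧ s(mStarS, wOld ws) ≠ q ∧ q ≠ e ∧
        s(mOld ms, wStarS) ≠ s(mStarS, wOld ws) := by
      simp [e, q, mOld, wOld, mStar, wStar, mStarS, wStarS]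
    rw [card_eq_three]
    refine ⟨_, _, _, h₆, h₃, h₄, ?_⟩
    ext p
    simp only [mem_symmDiff, mem_insert, mem_singleton]
    grind
  rw [M1def7, M2def7, card_symmDiff_union_union, ← image_symmDiff _ _ hinj,
    card_image_of_injective _ hinj, hnew]
  rw [disjoint_right]
  simp only [mem_union, mem_insert, mem_singleton, not_or]
  rintro p ((rfl | rfl | rfl) | rfl | rfl) <;> constructor <;>
    first
    | (apply mk_notMem_image_map_left; simp; done)
    | (apply mk_notMem_image_map_right; simp)

theorem eq_M2def7_preimage (hM : IsMatching M) (he : s(mStar, wStar) ∈ M)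
    (hq : s(mStarS, wStarS) ∈ M) :
    M = M2def7 (M.preimage (Sym2.map emb7) (Sym2.map.injective emb7_injective).injOn) := by
  ext p
  induction p using Sym2.ind with | _ x y => ?_
  rw [M2def7, mem_union, mem_insert, mem_singleton]
  constructor
  · intro h
    by_cases hx : x ∈ Set.range emb7
    · by_cases hy : y ∈ Set.range emb7
      · obtain ⟨a, rfl⟩ := hx
        obtain ⟨b, rfl⟩ := hy
        refine Or.inl ((mk_mem_image_map_iff emb7_injective).mpr ?_)
        rwa [mem_preimage, Sym2.map_mk]
      · rw [Sym2.eq_swap]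
        exact Or.inr (eq_mStar_wStar_or_of_notMem_range hM he hq (Sym2.eq_swap ▸ h) hy)
    · exact Or.inr (eq_mStar_wStar_or_of_notMem_range hM he hq h hx)
  · rintro (h | h | h)
    · obtain ⟨p, hp, hpe⟩ := mem_image.mp h
      exact hpe ▸ mem_preimage.mp hp
    · exact h ▸ he
    · exact h ▸ hq

end Lifts

namespace prof7

variable {P : PrefProfile (U ⊕ W)} {om : U → ℕ} {ow : W → ℕ} {ms : U} {ws : W} {sw : Bool}
  {u : U} {w : W} {a b c : U ⊕ W} {y : Agent7 U W}

theorem mem_acc_mOld : y ∈ (prof7 P om ow ms ws sw).acc (mOld u) ↔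
    (∃ x ∈ P.acc (Sum.inl u), emb7 x = y) ∨ y = wStar ∨ (u = ms ∧ y = wStarS) := by
  change y ∈ (P.acc (Sum.inl u)).image emb7 ∪ {wStar} ∪ (if u = ms then {wStarS} else ∅) ↔ _
  split_ifs with h <;> simp only [mem_union, mem_image, mem_singleton, notMem_empty, h,
    true_and, false_and, or_false, or_assoc]

theorem mem_acc_wOld : y ∈ (prof7 P om ow ms ws sw).acc (wOld w) ↔
    (∃ x ∈ P.acc (Sum.inr w), emb7 x = y) ∨ y = mStar ∨ (w = ws ∧ y = mStarS) := by
  change y ∈ (P.acc (Sum.inr w)).image emb7 ∪ {mStar} ∪ (if w = ws then {mStarS} else ∅) ↔ _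
  split_ifs with h <;> simp only [mem_union, mem_image, mem_singleton, notMem_empty, h,
    true_and, false_and, or_false, or_assoc]

theorem mem_acc_mStar :
    y ∈ (prof7 P om ow ms ws sw).acc mStar ↔ (∃ w, wOld w = y) ∨ y = wStar := by
  change y ∈ univ.image (fun w : W => wOld w) ∪ {wStar} ↔ _
  simp [or_comm]

theorem mem_acc_wStar :
    y ∈ (prof7 P om ow ms ws sw).acc wStar ↔ (∃ u, mOld u = y) ∨ y = mStar := by
  change y ∈ univ.image (fun u : U => mOld u) ∪ {mStar} ↔ _
  simp [or_comm]

theorem mem_acc_mStarS : y ∈ (prof7 P om ow ms ws sw).acc mStarS ↔ y = wOld ws ∨ y = wStarS := by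
  change y ∈ ({wOld ws, wStarS} : Finset _) ↔ _
  simp

theorem mem_acc_wStarS : y ∈ (prof7 P om ow ms ws sw).acc wStarS ↔ y = mStarS ∨ y = mOld ms := by
  change y ∈ ({mStarS, mOld ms} : Finset _) ↔ _
  simp

theorem mem_acc_emb7_iff : emb7 b ∈ (prof7 P om ow ms ws sw).acc (emb7 a) ↔ b ∈ P.acc a := by
  rcases a with u | w
  · simp only [show emb7 (Sum.inl u) = mOld u from rfl, mem_acc_mOld, emb7_injective.eq_iff]
    simp
  · simp only [show emb7 (Sum.inr w) = wOld w from rfl, mem_acc_wOld, emb7_injective.eq_iff]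
    simp

theorem rank_emb7 (hP : P.IsBipartite) (hb : b ∈ P.acc a) :
    (prof7 P om ow ms ws sw).rank (emb7 a) (emb7 b) = P.rank a b + 1 := by
  rcases a with u | w
  · obtain ⟨w, rfl⟩ := hP.1 u b hb; rfl
  · obtain ⟨u, rfl⟩ := hP.2 w b hb; rfl

theorem prefers_emb7_iff (hP : P.IsBipartite) (hb : b ∈ P.acc a) (hc : c ∈ P.acc a) :
    (prof7 P om ow ms ws sw).Prefers (emb7 a) (emb7 b) (emb7 c) ↔ P.Prefers a b c := by
  simp only [PrefProfile.Prefers, rank_emb7 hP hb, rank_emb7 hP hc, Nat.add_lt_add_iff_right]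

theorem rank_mOld_emb7_lt (hP : P.IsBipartite) (hc : c ∈ P.acc (Sum.inl u)) :
    (prof7 P om ow ms ws sw).rank (mOld u) (emb7 c) <
      (prof7 P om ow ms ws sw).rank (mOld u) wStar := by
  change _ < (P.acc (Sum.inl u)).sup (P.rank (Sum.inl u)) + 2
  rw [show mOld u = emb7 (Sum.inl u) from rfl, rank_emb7 hP hc]
  have := le_sup (f := P.rank (Sum.inl u)) hc
  omega

theorem rank_wOld_emb7_lt (hP : P.IsBipartite) (hc : c ∈ P.acc (Sum.inr w)) :
    (prof7 P om ow ms ws sw).rank (wOld w) (emb7 c) <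
      (prof7 P om ow ms ws sw).rank (wOld w) mStar := by
  change _ < (P.acc (Sum.inr w)).sup (P.rank (Sum.inr w)) + 2
  rw [show wOld w = emb7 (Sum.inr w) from rfl, rank_emb7 hP hc]
  have := le_sup (f := P.rank (Sum.inr w)) hc
  omega

theorem rank_wStar_mOld_lt :
    (prof7 P om ow ms ws sw).rank wStar (mOld u) < (prof7 P om ow ms ws sw).rank wStar mStar :=
  Nat.lt_succ_of_le (le_sup (mem_univ u))

theorem rank_mStar_wOld_lt :
    (prof7 P om ow ms ws sw).rank mStar (wOld w) < (prof7 P om ow ms ws sw).rank mStar wStar :=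
  Nat.lt_succ_of_le (le_sup (mem_univ w))

variable {N : Finset (Sym2 (U ⊕ W))} {M : Finset (Sym2 (Agent7 U W))}

theorem blocks_of_blocks_emb7 (hP : P.IsBipartite) (hN : Acceptable P N)
    (hNM : N.image (Sym2.map emb7) ⊆ M)
    (hb : Blocks (prof7 P om ow ms ws sw) M (emb7 a) (emb7 b)) : Blocks P N a b := by
  obtain ⟨hab, hba, ha, hb⟩ := hb
  have hab := mem_acc_emb7_iff.mp hab
  have hba := mem_acc_emb7_iff.mp hba
  have hlift {x y} (h : s(x, y) ∈ N) : s(emb7 x, emb7 y) ∈ M :=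
    hNM ((mk_mem_image_map_iff emb7_injective).mpr h)
  exact ⟨hab, hba, fun c hc => (prefers_emb7_iff hP hab (hN _ _ hc)).mp (ha _ (hlift hc)),
    fun c hc => (prefers_emb7_iff hP hba (hN _ _ hc)).mp (hb _ (hlift hc))⟩

theorem blocks_emb7_of_blocks (hP : P.IsBipartite) (hN : Acceptable P N)
    (hMN : ∀ a y, s(emb7 a, y) ∈ M → ∃ c, emb7 c = y ∧ s(a, c) ∈ N) (hb : Blocks P N a b) :
    Blocks (prof7 P om ow ms ws sw) M (emb7 a) (emb7 b) := by
  obtain ⟨hab, hba, ha, hb⟩ := hb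
  refine ⟨mem_acc_emb7_iff.mpr hab, mem_acc_emb7_iff.mpr hba, fun y hy => ?_, fun y hy => ?_⟩
  · obtain ⟨c, rfl, hc⟩ := hMN a y hy
    exact (prefers_emb7_iff hP hab (hN _ _ hc)).mpr (ha c hc)
  · obtain ⟨c, rfl, hc⟩ := hMN b y hy
    exact (prefers_emb7_iff hP hba (hN _ _ hc)).mpr (hb c hc)

theorem not_blocks_mOld (hP : P.IsBipartite) (hN : IsStable P N)
    (hNM : N.image (Sym2.map emb7) ⊆ M)
    (hms : TopMatched (prof7 P om ow ms ws sw) M (mOld ms) ∨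
      TopMatched (prof7 P om ow ms ws sw) M wStarS)
    (hu : Matched N (Sum.inl u) ∨ TopMatched (prof7 P om ow ms ws sw) M (mOld u)) :
    ¬ Blocks (prof7 P om ow ms ws sw) M (mOld u) y := by
  intro hb
  rcases hu with ⟨c, hc⟩ | htop
  · rcases mem_acc_mOld.mp hb.1 with ⟨b, -, rfl⟩ | rfl | ⟨rfl, rfl⟩
    · exact hN.2.2 _ _ (blocks_of_blocks_emb7 (a := Sum.inl u) hP hN.2.1 hNM hb)
    · exact not_blocks_of_rank_le (hNM ((mk_mem_image_map_iff emb7_injective).mpr hc))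
        (rank_mOld_emb7_lt hP (hN.2.1 _ _ hc)).le hb
    · exact hms.elim (fun h => h.not_blocks hb) (fun h => h.not_blocks_right hb)
  · exact htop.not_blocks hb

theorem not_blocks_mStar (hP : P.IsBipartite) (hN : Acceptable P N)
    (hNM : N.image (Sym2.map emb7) ⊆ M) (hstar : s(mStar, wStar) ∈ M)
    (hW : ∀ w, Matched N (Sum.inr w) ∨ TopMatched (prof7 P om ow ms ws sw) M (wOld w)) :
    ¬ Blocks (prof7 P om ow ms ws sw) M mStar y := by
  intro hb
  rcases mem_acc_mStar.mp hb.1 with ⟨w, rfl⟩ | rfl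
  · rcases hW w with ⟨c, hc⟩ | htop
    · exact not_blocks_of_rank_le_right (hNM ((mk_mem_image_map_iff emb7_injective).mpr hc))
        (rank_wOld_emb7_lt hP (hN _ _ hc)).le hb
    · exact htop.not_blocks_right hb
  · exact not_blocks_of_rank_le hstar le_rfl hb

theorem not_blocks_of_image_subset (hP : P.IsBipartite) (hN : IsStable P N)
    (hNM : N.image (Sym2.map emb7) ⊆ M) (hstar : s(mStar, wStar) ∈ M)
    (hmStarS : TopMatched (prof7 P om ow ms ws sw) M mStarS)
    (hms : TopMatched (prof7 P om ow ms ws sw) M (mOld ms) ∨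
      TopMatched (prof7 P om ow ms ws sw) M wStarS)
    (hold : ∀ a, Matched N a ∨ TopMatched (prof7 P om ow ms ws sw) M (emb7 a))
    (x y : Agent7 U W) : ¬ Blocks (prof7 P om ow ms ws sw) M x y := by
  have hman (u : U) (y) : ¬ Blocks (prof7 P om ow ms ws sw) M (mOld u) y :=
    not_blocks_mOld hP hN hNM hms (hold (Sum.inl u))
  have hmStar (y) : ¬ Blocks (prof7 P om ow ms ws sw) M mStar y :=
    not_blocks_mStar hP hN.2.1 hNM hstar fun w => hold (Sum.inr w)
  intro hb
  rcases x with (u | i) | (w | i)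
  · exact hman u y hb
  · fin_cases i
    · exact hmStar y hb
    · exact hmStarS.not_blocks hb
  · rcases mem_acc_wOld.mp hb.1 with ⟨b, hb', rfl⟩ | rfl | ⟨-, rfl⟩
    · obtain ⟨u, rfl⟩ := hP.2 w b hb'
      exact hman u _ hb.symm
    · exact hmStar _ hb.symm
    · exact hmStarS.not_blocks hb.symm
  · fin_cases i
    · rcases mem_acc_wStar.mp hb.1 with ⟨u, rfl⟩ | rfl
      · exact hman u _ hb.symm
      · exact hmStar _ hb.symm
    · rcases mem_acc_wStarS.mp hb.1 with rfl | rfl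
      · exact hmStarS.not_blocks hb.symm
      · exact hman ms _ hb.symm

theorem acceptable_image_emb7 (hN : Acceptable P N) :
    Acceptable (prof7 P om ow ms ws sw) (N.image (Sym2.map emb7)) := by
  intro x y h
  obtain ⟨a, b, hab, rfl, rfl⟩ := exists_of_mk_mem_image_map h
  exact mem_acc_emb7_iff.mpr (hN a b hab)

theorem isStable_M1def7 (hP : P.IsBipartite) (hN : IsStable P N)
    (hunm : ∀ a : U ⊕ W, ¬ Matched N a ↔ (a = Sum.inl ms ∨ a = Sum.inr ws)) :
    IsStable (prof7 P om ow ms ws false) (M1def7 N ms ws) := by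
  have hp₂ : s(mOld ms, wStarS) ∈ M1def7 N ms ws := by simp [M1def7]
  have hp₃ : s(mStarS, wOld ws) ∈ M1def7 N ms ws := by simp [M1def7]
  refine ⟨isMatching_M1def7 hN.1 ((hunm _).mpr (Or.inl rfl)) ((hunm _).mpr (Or.inr rfl)), ?_,
    not_blocks_of_image_subset hP hN subset_union_left (by simp [M1def7]) ⟨_, hp₃, rfl⟩
      (Or.inl ⟨_, hp₂, rfl⟩) fun a => ?_⟩
  · rw [M1def7_eq_insert]
    refine (((acceptable_image_emb7 hN.2.1).insert ?_ ?_).insert ?_ ?_).insert ?_ ?_ <;>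
      simp [mem_acc_mOld, mem_acc_wOld, mem_acc_mStar, mem_acc_wStar, mem_acc_mStarS,
        mem_acc_wStarS]
  · by_cases ha : Matched N a
    · exact Or.inl ha
    · rcases (hunm a).mp ha with rfl | rfl
      · exact Or.inr ⟨_, hp₂, rfl⟩
      · exact Or.inr ⟨_, Sym2.eq_swap ▸ hp₃, rfl⟩

theorem isStable_M2def7 (hP : P.IsBipartite) (hN : IsStable P N) (hperf : IsPerfect N) :
    IsStable (prof7 P om ow ms ws true) (M2def7 N) := by
  have hq : s(mStarS, wStarS) ∈ M2def7 N := by simp [M2def7]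
  refine ⟨isMatching_M2def7 hN.1, ?_, not_blocks_of_image_subset hP hN subset_union_left
    (by simp [M2def7]) ⟨_, hq, rfl⟩ (Or.inr ⟨_, Sym2.eq_swap ▸ hq, rfl⟩)
    fun a => Or.inl (hperf a)⟩
  rw [M2def7_eq_insert]
  refine ((acceptable_image_emb7 hN.2.1).insert ?_ ?_).insert ?_ ?_ <;>
    simp [mem_acc_mStar, mem_acc_wStar, mem_acc_mStarS, mem_acc_wStarS]

theorem mStarS_wStarS_mem (hM : IsStable (prof7 P om ow ms ws true) M) :
    s(mStarS, wStarS) ∈ M := by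
  by_contra h
  refine hM.2.2 mStarS wStarS ⟨mem_acc_mStarS.mpr (Or.inr rfl), mem_acc_wStarS.mpr (Or.inl rfl),
    fun c hc => ?_, fun c hc => ?_⟩
  · rcases mem_acc_mStarS.mp (hM.2.1 _ _ hc) with rfl | rfl
    · exact Nat.zero_lt_one
    · exact absurd hc h
  · rcases mem_acc_wStarS.mp (hM.2.1 _ _ hc) with rfl | rfl
    · exact absurd (Sym2.eq_swap ▸ hc) h
    · exact Nat.zero_lt_one

theorem exists_mk_emb7_mem (hM : IsStable (prof7 P om ow ms ws sw) M)
    (he : s(mStar, wStar) ∈ M) (hq : s(mStarS, wStarS) ∈ M) (a : U ⊕ W) :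
    ∃ b, s(emb7 a, emb7 b) ∈ M := by
  obtain ⟨y, hy⟩ : Matched M (emb7 a) := by
    by_contra hun
    rcases a with u | w
    · refine hM.2.2 (mOld u) wStar ⟨mem_acc_mOld.mpr (Or.inr (Or.inl rfl)),
        mem_acc_wStar.mpr (Or.inl ⟨u, rfl⟩), fun c hc => absurd ⟨c, hc⟩ hun, fun c hc => ?_⟩
      rw [hM.1.2 _ _ _ hc (Sym2.eq_swap ▸ he)]
      exact rank_wStar_mOld_lt
    · refine hM.2.2 (wOld w) mStar ⟨mem_acc_wOld.mpr (Or.inr (Or.inl rfl)),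
        mem_acc_mStar.mpr (Or.inl ⟨w, rfl⟩), fun c hc => absurd ⟨c, hc⟩ hun, fun c hc => ?_⟩
      rw [hM.1.2 _ _ _ hc he]
      exact rank_mStar_wOld_lt
  by_cases hy' : y ∈ Set.range emb7
  · obtain ⟨b, rfl⟩ := hy'
    exact ⟨b, hy⟩
  · rcases eq_mStar_wStar_or_of_notMem_range hM.1 he hq (Sym2.eq_swap ▸ hy) hy' with h | h <;>
      simp at h

theorem exists_perfect_of_isStable (hP : P.IsBipartite)
    (hM : IsStable (prof7 P om ow ms ws true) M) (he : s(mStar, wStar) ∈ M) :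
    ∃ N, IsStable P N ∧ IsPerfect N ∧ M = M2def7 N := by
  have hq := mStarS_wStarS_mem hM
  set N := M.preimage (Sym2.map emb7) (Sym2.map.injective emb7_injective).injOn
  have hmemN {a b} : s(a, b) ∈ N ↔ s(emb7 a, emb7 b) ∈ M := by rw [mem_preimage, Sym2.map_mk]
  have hMN (a y) (h : s(emb7 a, y) ∈ M) : ∃ c, emb7 c = y ∧ s(a, c) ∈ N := by
    obtain ⟨c, hc⟩ := exists_mk_emb7_mem hM he hq a
    exact ⟨c, hM.1.2 _ _ _ hc h, hmemN.mpr hc⟩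
  have hNacc : Acceptable P N := fun a b h => mem_acc_emb7_iff.mp (hM.2.1 _ _ (hmemN.mp h))
  refine ⟨N, ⟨hM.1.preimage_map emb7_injective, hNacc, fun a b hb => hM.2.2 _ _
    (blocks_emb7_of_blocks hP hNacc hMN hb)⟩, fun a => ?_, eq_M2def7_preimage hM.1 he hq⟩
  obtain ⟨b, hb⟩ := exists_mk_emb7_mem hM he hq a
  exact ⟨b, hmemN.mpr hb⟩

end prof7

theorem stmt7_general (P : PrefProfile (U ⊕ W))
    (hbU : ∀ u : U, ∀ x ∈ P.acc (Sum.inl u), ∃ w : W, x = Sum.inr w)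
    (hbW : ∀ w : W, ∀ x ∈ P.acc (Sum.inr w), ∃ u : U, x = Sum.inl u)
    (N : Finset (Sym2 (U ⊕ W))) (hN : IsStable P N)
    (ms : U) (ws : W)
    (hunm : ∀ a : U ⊕ W, ¬ Matched N a ↔ (a = Sum.inl ms ∨ a = Sum.inr ws))
    (ℓ : ℕ) (om : U → ℕ) (ow : W → ℕ) :
    IsStable (prof7 P om ow ms ws false) (M1def7 N ms ws) ∧
    ((∃ Nstar, IsStable P Nstar ∧ IsPerfect Nstar ∧ (symmDiff N Nstar).card ≤ ℓ) ↔
     (∃ M2, IsStable (prof7 P om ow ms ws true) M2 ∧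
        s((mStar : Agent7 U W), wStar) ∈ M2 ∧
        (symmDiff (M1def7 N ms ws) M2).card ≤ ℓ + 3)) := by
  have hP : P.IsBipartite := ⟨hbU, hbW⟩
  refine ⟨prof7.isStable_M1def7 hP hN hunm, ?_, ?_⟩
  · rintro ⟨N', hN', hperf, hcard⟩
    refine ⟨M2def7 N', prof7.isStable_M2def7 hP hN' hperf, by simp [M2def7], ?_⟩
    rw [card_symmDiff_M1def7_M2def7]
    omega
  · rintro ⟨M, hM, he, hcard⟩
    obtain ⟨N', hN', hperf, rfl⟩ := prof7.exists_perfect_of_isStable hP hM he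
    rw [card_symmDiff_M1def7_M2def7] at hcard
    exact ⟨N', hN', hperf, by omega⟩

/-- The reduction from finding a close perfect weakly stable matching in an SM-T
instance to ISMFE-T restricted to one forced pair `{m*, w*}`: `M1` is weakly stable
w.r.t. `P1`, and the original instance has a perfect weakly stable matching `N*`
with `|N △ N*| ≤ ℓ` iff the constructed instance has a weakly stable matching `M2`
(w.r.t. `P2`) containing `{m*, w*}` with `|M1 △ M2| ≤ ℓ + 3`. -/
theorem stmt7 (P : PrefProfile (U ⊕ W)) (hl : P.Lawful)
    (hbU : ∀ u : U, ∀ x ∈ P.acc (Sum.inl u), ∃ w : W, x = Sum.inr w)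
    (hbW : ∀ w : W, ∀ x ∈ P.acc (Sum.inr w), ∃ u : U, x = Sum.inl u)
    (n : ℕ) (hU : Fintype.card U = n) (hW : Fintype.card W = n)
    (N : Finset (Sym2 (U ⊕ W))) (hN : IsStable P N) (hNcard : N.card + 1 = n)
    (ms : U) (ws : W)
    (hunm : ∀ a : U ⊕ W, ¬ Matched N a ↔ (a = Sum.inl ms ∨ a = Sum.inr ws))
    (ℓ : ℕ) (om : U → ℕ) (ow : W → ℕ)
    (hom : Function.Injective om) (how : Function.Injective ow) :
    IsStable (prof7 P om ow ms ws false) (M1def7 N ms ws) ∧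
    ((∃ Nstar, IsStable P Nstar ∧ IsPerfect Nstar ∧ (symmDiff N Nstar).card ≤ ℓ) ↔
     (∃ M2, IsStable (prof7 P om ow ms ws true) M2 ∧
        s((mStar : Agent7 U W), wStar) ∈ M2 ∧
        (symmDiff (M1def7 N ms ws) M2).card ≤ ℓ + 3)) :=
  stmt7_general P hbU hbW N hN ms ws hunm ℓ om ow
end
end
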